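/- Let v be a vertex of a finite directed multigraph G. There exist c > 1 and N ∈ ℕ with |Path_G(v,n)| ≥ cⁿ for all n ≥ N if and only if there is a vertex w with v ≥ w such that w lies on two distinct simple cycles of G. -/

import Mathlib

open Filter Topology

variable {V E : Type*}

/-- A nonempty list of edges forms a directed path:
the target of each edge is the source of the next. -/
def IsDiPath (src tgt : E → V) (l : List E) : Prop :=
  l ≠ [] ∧ l.Chain' (fun e f => tgt e = src f)

/-- The path `l` starts at the vertex `v` (the source of its first edge is `v`). -/
def StartsAt (src : E → V) (l : List E) (v : V) : Prop :=
  l.head?.map src = some v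

/-- The path `l` ends at the vertex `w` (the target of its last edge is `w`). -/
def EndsAt (tgt : E → V) (l : List E) (w : V) : Prop :=
  l.getLast?.map tgt = some w

/-- `l` is a closed path: a path such that the target of the last edge
equals the source of the first edge. -/
def IsClosedDiPath (src tgt : E → V) (l : List E) : Prop :=
  IsDiPath src tgt l ∧ ∃ v : V, StartsAt src l v ∧ EndsAt tgt l v

/-- `l` is a simple cycle: a closed path whose edge sources are pairwise distinct. -/
def IsSimpleCycle (src tgt : E → V) (l : List E) : Prop :=
  IsClosedDiPath src tgt l ∧ (l.map src).Nodup

/-- The vertex `v` lies on the cycle `l`, i.e. it is the source of one of its edges. -/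
def OnCycle (src : E → V) (l : List E) (v : V) : Prop :=
  v ∈ l.map src

/-- Two simple cycles are distinct if neither is a cyclic rotation of the other;
the graph has no intersecting cycles if any two distinct simple cycles are
vertex-disjoint. -/
def NoIntersectingCycles (src tgt : E → V) : Prop :=
  ∀ l l' : List E, IsSimpleCycle src tgt l → IsSimpleCycle src tgt l' →
    ¬ l.IsRotated l' → ∀ v : V, ¬ (OnCycle src l v ∧ OnCycle src l' v)

/-- `v ≥ w`: either `v = w` or there is a directed path from `v` to `w`. -/
def Reaches (src tgt : E → V) (v w : V) : Prop :=
  v = w ∨ ∃ l : List E, IsDiPath src tgt l ∧ StartsAt src l v ∧ EndsAt tgt l w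

/-- `v` and `w` are mutually reachable. -/
def MutReach (src tgt : E → V) (v w : V) : Prop :=
  Reaches src tgt v w ∧ Reaches src tgt w v

/-- The number of directed paths of length `n` in the graph starting at `v`. -/
noncomputable def pathCount (src tgt : E → V) (v : V) (n : ℕ) : ℕ :=
  Nat.card {l : List E // l.length = n ∧ IsDiPath src tgt l ∧ StartsAt src l v}

/-- An infinite path in the graph. -/
def IsInfPath (src tgt : E → V) (p : ℕ → E) : Prop :=
  ∀ n : ℕ, tgt (p n) = src (p (n + 1))

/-- The vertex `v` is visited infinitely often by the infinite path `p`. -/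
def VisitedInfOften (src : E → V) (p : ℕ → E) (v : V) : Prop :=
  ∀ N : ℕ, ∃ n ≥ N, src (p n) = v

/-- `v ≥ C`: the vertex `v` reaches some vertex on the cycle `C`. -/
def ReachesCycle (src tgt : E → V) (v : V) (l : List E) : Prop :=
  ∃ w : V, OnCycle src l w ∧ Reaches src tgt v w

/-- `C ≥ C'`: some vertex on the cycle `C` reaches the cycle `C'`. -/
def CycleReachesCycle (src tgt : E → V) (l l' : List E) : Prop :=
  ∃ v : V, OnCycle src l v ∧ ReachesCycle src tgt v l'

/-- Two cycles are vertex-disjoint. -/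
def CyclesDisjoint (src : E → V) (l l' : List E) : Prop :=
  ∀ v : V, ¬ (OnCycle src l v ∧ OnCycle src l' v)

/-- The vertex `v` lies on two distinct simple cycles. -/
def OnTwoCycles (src tgt : E → V) (v : V) : Prop :=
  ∃ l l' : List E, IsSimpleCycle src tgt l ∧ IsSimpleCycle src tgt l' ∧
    ¬ l.IsRotated l' ∧ OnCycle src l v ∧ OnCycle src l' v

/-- The adjacency matrix of the graph, as a real matrix: the `(a, b)` entry is the
number of edges from `a` to `b`. -/
noncomputable def adjMatrix (src tgt : E → V) : Matrix V V ℝ :=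
  Matrix.of fun a b => (Nat.card {e : E // src e = a ∧ tgt e = b} : ℝ)

/-!
If some `w` reachable from `v` lies on two distinct simple cycles, rotate them to start at `w`,
say `R₁` and `R₂`. Then `R₁ ++ R₂` and `R₂ ++ R₁` are distinct closed walks at `w` of the same
length `L`, so a fixed path from `v` to `w` followed by any word of length `q` in these two
blocks gives `2 ^ q` different paths, and paths of length `n` number at least `2 ^ ((n - d) / L)`.

Conversely, suppose no vertex reachable from `v` lies on two distinct simple cycles. An edge
occurring twice in a path from `v` starts a simple cycle, and at each vertex reachable from `v`
at most one edge starts a simple cycle. So such a path is determined by the positions of its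
edges that start no simple cycle, and there are at most `(n + 1) ^ |E|` paths of length `n`.
-/

section Lists

theorem List.append_ne_append_comm {α : Type*} {a b : List α} (ha : a.Nodup) (hb : b.Nodup)
    (ha₀ : a ≠ []) (hb₀ : b ≠ []) (hab : a ≠ b) : a ++ b ≠ b ++ a := by
  wlog hle : a.length ≤ b.length generalizing a b
  · exact fun h => this hb ha hb₀ ha₀ hab.symm (by omega) h.symm
  intro h
  rcases hle.eq_or_lt with heq | hlt
  · exact hab (List.append_inj h heq).1
  · -- reading position `a.length` on both sides gives `b[0] = b[a.length]`
    have hpos := congrArg (·[a.length]?) h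
    simp only [List.getElem?_append_right le_rfl, Nat.sub_self,
      List.getElem?_append_left hlt] at hpos
    rw [List.getElem?_eq_getElem (List.length_pos_iff.2 hb₀), List.getElem?_eq_getElem hlt,
      Option.some.injEq, hb.getElem_inj_iff] at hpos
    exact ha₀ (List.length_eq_zero_iff.1 hpos.symm)

theorem List.flatten_map_cond_injective {α : Type*} {B₁ B₂ : List α} (hlen : B₁.length = B₂.length)
    (hne : B₁ ≠ B₂) (q : ℕ) :
    Function.Injective fun s : List.Vector Bool q => (s.toList.map (cond · B₁ B₂)).flatten := by
  suffices ∀ s t : List Bool, s.length = t.length →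
      (s.map (cond · B₁ B₂)).flatten = (t.map (cond · B₁ B₂)).flatten → s = t from
    fun s t h => List.Vector.toList_injective (this _ _ (by simp) h)
  intro s
  induction s with
  | nil => intro t ht _; simpa using ht.symm
  | cons a s ih =>
    rintro (_ | ⟨b, t⟩) ht h
    · simp at ht
    · simp only [List.map_cons, List.flatten_cons] at h
      obtain ⟨hab, hst⟩ := List.append_inj h (by cases a <;> cases b <;> simp [hlen])
      have : a = b := by cases a <;> cases b <;> simp_all [eq_comm]
      rw [this, ih t (by simpa using ht) hst]

theorem List.length_flatten_map_cond {α : Type*} {B₁ B₂ : List α} (hlen : B₁.length = B₂.length)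
    (s : List Bool) : (s.map (cond · B₁ B₂)).flatten.length = s.length * B₁.length := by
  induction s with
  | nil => simp
  | cons a s ih => cases a <;> simp [ih, hlen] <;> ring

end Lists

section Growth

theorem exists_one_lt_pow_le_of_two_pow_div_le {f : ℕ → ℕ} {d L : ℕ} (hL : 0 < L)
    (h : ∀ n, d < n → 2 ^ ((n - d) / L) ≤ f n) :
    ∃ c : ℝ, 1 < c ∧ ∃ N : ℕ, ∀ n ≥ N, c ^ n ≤ (f n : ℝ) := by
  set c : ℝ := 2 ^ ((2 * L : ℕ) : ℝ)⁻¹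
  have hc : 1 < c := Real.one_lt_rpow (by norm_num) (by positivity)
  have hcL : c ^ (2 * L) = 2 := Real.rpow_inv_natCast_pow (by norm_num) (by omega)
  refine ⟨c, hc, 2 * d + 2 * L + 1, fun n hn => ?_⟩
  have hq : n ≤ 2 * L * ((n - d) / L) := by
    have := Nat.div_add_mod (n - d) L
    have := Nat.mod_lt (n - d) hL
    rw [mul_assoc]
    omega
  calc c ^ n ≤ c ^ (2 * L * ((n - d) / L)) := pow_le_pow_right₀ hc.le hq
    _ = ((2 ^ ((n - d) / L) : ℕ) : ℝ) := by rw [pow_mul, hcL]; norm_cast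
    _ ≤ f n := by exact_mod_cast h n (by omega)

theorem not_exists_one_lt_pow_le_of_le_pow {f : ℕ → ℕ} {K : ℕ} (h : ∀ n, f n ≤ (n + 1) ^ K) :
    ¬ ∃ c : ℝ, 1 < c ∧ ∃ N : ℕ, ∀ n ≥ N, c ^ n ≤ (f n : ℝ) := by
  rintro ⟨c, hc, N, hN⟩
  have hc₀ : 0 < c := by linarith
  obtain ⟨m, hsmall, hm⟩ := ((tendsto_pow_const_div_const_pow_of_one_lt K hc).eventually
    (gt_mem_nhds (inv_pos.2 hc₀))).and (eventually_ge_atTop (N + 1)) |>.exists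
  have hbound : c ^ (m - 1) ≤ (m : ℝ) ^ K := by
    calc c ^ (m - 1) ≤ f (m - 1) := hN _ (by omega)
      _ ≤ ((m - 1 + 1) ^ K : ℕ) := by exact_mod_cast h (m - 1)
      _ = (m : ℝ) ^ K := by rw [Nat.sub_add_cancel (by omega)]; push_cast; ring
  have hcm : c ^ m = c * c ^ (m - 1) := by rw [← pow_succ', Nat.sub_add_cancel (by omega)]
  rw [div_lt_iff₀ (by positivity), hcm, inv_mul_cancel_left₀ hc₀.ne'] at hsmall
  linarith

end Growth

section Walks

variable {src tgt : E → V} {u v w w' : V} {l l₁ l₂ : List E} {i : ℕ}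

def IsWalk (src tgt : E → V) (u w : V) (l : List E) : Prop :=
  l.IsChain (fun e f => tgt e = src f) ∧ (∀ e ∈ l.head?, src e = u) ∧
    (∀ e ∈ l.getLast?, tgt e = w) ∧ (l = [] → u = w)

theorem IsWalk.nil : IsWalk src tgt u u [] := by
  simp [IsWalk]

theorem IsWalk.append (h₁ : IsWalk src tgt u v l₁) (h₂ : IsWalk src tgt v w l₂) :
    IsWalk src tgt u w (l₁ ++ l₂) := by
  obtain ⟨hc₁, hh₁, hl₁, hn₁⟩ := h₁
  obtain ⟨hc₂, hh₂, hl₂, hn₂⟩ := h₂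
  refine ⟨List.isChain_append.2 ⟨hc₁, hc₂, fun e he f hf => (hl₁ e he).trans (hh₂ f hf).symm⟩,
    ?_, ?_, ?_⟩
  · rcases l₁ with _ | ⟨a, t⟩
    · simpa [hn₁ rfl] using hh₂
    · simpa using hh₁
  · rcases l₂.eq_nil_or_concat with rfl | ⟨t, a, rfl⟩
    · simpa [← hn₂ rfl] using hl₁
    · simpa using hl₂
  · intro h
    simp only [List.append_eq_nil_iff] at h
    exact (hn₁ h.1).trans (hn₂ h.2)

theorem IsWalk.flatten {Bs : List (List E)} (h : ∀ B ∈ Bs, IsWalk src tgt w w B) :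
    IsWalk src tgt w w Bs.flatten := by
  induction Bs with
  | nil => exact IsWalk.nil
  | cons B Bs ih =>
    exact (h B (by simp)).append (ih fun B' hB' => h B' (by simp [hB']))

theorem IsWalk.src_getElem_zero (h : IsWalk src tgt u w l) (hl : 0 < l.length) :
    src l[0] = u :=
  h.2.1 _ (by simp [List.head?_eq_getElem?, hl])

theorem IsWalk.take (h : IsWalk src tgt u w l) (hi : i < l.length) :
    IsWalk src tgt u (src l[i]) (l.take i) := by
  refine ⟨h.1.take i, fun e he => h.2.1 e ?_, fun e he => ?_, fun h0 => ?_⟩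
  · rw [List.head?_take] at he
    split_ifs at he <;> simp_all
  · rw [List.getLast?_take] at he
    split_ifs at he with hi0
    · simp at he
    · rw [List.getElem?_eq_getElem (by omega)] at he
      simp only [Option.some_or, Option.mem_def, Option.some.injEq] at he
      subst he
      exact (List.isChain_iff_getElem.1 h.1) (i - 1) (by omega) |>.trans (by congr 2; omega)
  · obtain rfl : i = 0 :=
      (List.take_eq_nil_iff.1 h0).resolve_right (List.ne_nil_of_length_pos (by omega))
    exact (h.src_getElem_zero hi).symm

theorem IsWalk.drop (h : IsWalk src tgt u w l) (hi : i < l.length) :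
    IsWalk src tgt (src l[i]) w (l.drop i) := by
  refine ⟨h.1.drop i, fun e he => ?_, fun e he => h.2.2.1 e ?_, fun h0 => ?_⟩
  · simp_all
  · rwa [List.getLast?_drop, if_neg (by omega)] at he
  · simp [List.drop_eq_nil_iff] at h0; omega

theorem IsWalk.target_unique (h : IsWalk src tgt u w l) (h' : IsWalk src tgt u w' l) : w = w' := by
  rcases l.eq_nil_or_concat with rfl | ⟨t, a, rfl⟩
  · exact (h.2.2.2 rfl).symm.trans (h'.2.2.2 rfl)
  · exact (h.2.2.1 a (by simp)).symm.trans (h'.2.2.1 a (by simp))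

theorem isWalk_iff_isDiPath (hl : l ≠ []) :
    IsWalk src tgt u w l ↔ IsDiPath src tgt l ∧ StartsAt src l u ∧ EndsAt tgt l w := by
  simp [IsWalk, IsDiPath, StartsAt, EndsAt, List.head?_eq_some_head hl,
    List.getLast?_eq_some_getLast hl, hl, List.Chain']

theorem IsDiPath.exists_isWalk (hl : IsDiPath src tgt l) (hu : StartsAt src l u) :
    ∃ w, IsWalk src tgt u w l :=
  ⟨tgt (l.getLast hl.1), (isWalk_iff_isDiPath hl.1).2
    ⟨hl, hu, by simp [EndsAt, List.getLast?_eq_some_getLast hl.1]⟩⟩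

theorem reaches_iff_exists_isWalk : Reaches src tgt u w ↔ ∃ l, IsWalk src tgt u w l := by
  constructor
  · rintro (rfl | ⟨l, hl, hu, hw⟩)
    · exact ⟨[], IsWalk.nil⟩
    · exact ⟨l, (isWalk_iff_isDiPath hl.1).2 ⟨hl, hu, hw⟩⟩
  · rintro ⟨l, hl⟩
    rcases eq_or_ne l [] with rfl | hne
    · exact .inl (hl.2.2.2 rfl)
    · exact .inr ⟨l, (isWalk_iff_isDiPath hne).1 hl⟩

theorem isClosedDiPath_iff : IsClosedDiPath src tgt l ↔ l ≠ [] ∧ ∃ u, IsWalk src tgt u u l := by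
  constructor
  · rintro ⟨hl, u, hu, hu'⟩
    exact ⟨hl.1, u, (isWalk_iff_isDiPath hl.1).2 ⟨hl, hu, hu'⟩⟩
  · rintro ⟨hne, u, hu⟩
    obtain ⟨hl, hs, he⟩ := (isWalk_iff_isDiPath hne).1 hu
    exact ⟨hl, u, hs, he⟩

end Walks

section SimpleCycles

variable {src tgt : E → V} {u w : V} {l C C' : List E} {e e' : E}

theorem exists_getElem_src_eq_of_not_nodup (h : ¬ (l.map src).Nodup) :
    ∃ i j, ∃ (hi : i < j) (hj : j < l.length), src l[i] = src l[j] := by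
  simp only [List.Nodup, List.pairwise_iff_getElem, List.length_map, List.getElem_map] at h
  push Not at h
  obtain ⟨i, j, hi, hj, hij, h⟩ := h
  exact ⟨i, j, hij, hj, h⟩

/-- Shortcutting a repeated vertex keeps the first edge, so a closed walk shrinks to a
simple cycle with the same first edge. -/
theorem exists_isSimpleCycle_head?_eq (hl : IsWalk src tgt u u l) (hne : l ≠ []) :
    ∃ C, IsSimpleCycle src tgt C ∧ C.head? = l.head? := by
  induction hn : l.length using Nat.strong_induction_on generalizing l u with
  | _ n ih =>
  by_cases hnd : (l.map src).Nodup
  · exact ⟨l, ⟨isClosedDiPath_iff.2 ⟨hne, u, hl⟩, hnd⟩, rfl⟩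
  obtain ⟨i, j, hij, hj, hsrc⟩ := exists_getElem_src_eq_of_not_nodup hnd
  rcases Nat.eq_zero_or_pos i with rfl | hi
  · have hwalk := hl.take hj
    rw [← hsrc, hl.src_getElem_zero (by omega)] at hwalk
    have hne' : l.take j ≠ [] := List.ne_nil_of_length_pos (by simp; omega)
    obtain ⟨C, hC, hhead⟩ := ih _ (by simp; omega) hwalk hne' rfl
    exact ⟨C, hC, by rw [hhead, List.head?_take, if_neg (by omega)]⟩
  · have hwalk := (hl.take (by omega : i < l.length)).append (hsrc ▸ hl.drop hj)
    have hne' : l.take i ++ l.drop j ≠ [] := List.ne_nil_of_length_pos (by simp; omega)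
    obtain ⟨C, hC, hhead⟩ := ih _ (by simp; omega) hwalk hne' rfl
    refine ⟨C, hC, ?_⟩
    rw [hhead, List.head?_append, List.head?_take, if_neg (by omega)]
    simp [List.head?_eq_getElem?, show 0 < l.length by omega]

theorem IsSimpleCycle.rotate (h : IsSimpleCycle src tgt C) (k : ℕ) :
    IsSimpleCycle src tgt (C.rotate k) := by
  obtain ⟨hne, u, hu⟩ := isClosedDiPath_iff.1 h.1
  have hk : k % C.length < C.length := Nat.mod_lt _ (List.length_pos_iff.2 hne)
  refine ⟨isClosedDiPath_iff.2 ⟨by simpa using hne, src C[k % C.length], ?_⟩, ?_⟩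
  · rw [List.rotate_eq_drop_append_take_mod]
    exact (hu.drop hk).append (hu.take hk)
  · rw [List.map_rotate]
    exact (List.IsRotated.nodup_iff ⟨k, rfl⟩).1 h.2

theorem IsSimpleCycle.exists_isRotated_isWalk (h : IsSimpleCycle src tgt C)
    (hw : OnCycle src C w) :
    ∃ R, IsSimpleCycle src tgt R ∧ C.IsRotated R ∧ IsWalk src tgt w w R ∧ R ≠ [] := by
  obtain ⟨i, hi, rfl⟩ := List.getElem_of_mem hw
  rw [List.length_map] at hi
  have hR := h.rotate i
  obtain ⟨hne, u, hu⟩ := isClosedDiPath_iff.1 hR.1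
  have hu' : u = src C[i] := by
    rw [← hu.src_getElem_zero (List.length_pos_iff.2 hne)]
    simp [List.getElem_rotate, Nat.mod_eq_of_lt hi]
  subst hu'
  exact ⟨C.rotate i, hR, ⟨i, rfl⟩, by simpa using hu, hne⟩

theorem IsSimpleCycle.head?_eq_of_isRotated (h : IsSimpleCycle src tgt C) (hrot : C.IsRotated C')
    (he : C.head? = some e) (he' : C'.head? = some e') (hsrc : src e = src e') : e = e' := by
  obtain ⟨k, rfl⟩ := hrot
  have hlen : 0 < C.length := List.length_pos_iff.2 h.1.1.1
  have hk : k % C.length < C.length := Nat.mod_lt _ hlen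
  rw [List.head?_eq_getElem?] at he he'
  simp only [List.length_rotate, hlen, List.getElem?_eq_getElem, List.getElem_rotate,
    Nat.zero_add, Option.some.injEq] at he he'
  subst he he'
  have : 0 = k % C.length := by
    simpa using (h.2.getElem_inj_iff (i := 0) (j := k % C.length)
      (hi := by simpa using hlen) (hj := by simpa using hk)).1 (by simpa using hsrc)
  simp [← this]

end SimpleCycles

section PolynomialBound

variable {src tgt : E → V} {u v w w' : V} {l l' : List E} {e e' : E} {i : ℕ}

def StartsSimpleCycle (src tgt : E → V) (e : E) : Prop :=
  ∃ C, IsSimpleCycle src tgt C ∧ C.head? = some e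

theorem IsWalk.startsSimpleCycle_of_getElem_eq (hl : IsWalk src tgt u w l) {j : ℕ} (hij : i < j)
    (hj : j < l.length) (h : l[i] = l[j]) : StartsSimpleCycle src tgt l[i] := by
  have hj' : j - i < (l.drop i).length := by simp; omega
  have hloop := (hl.drop (by omega : i < l.length)).take hj'
  rw [show src (l.drop i)[j - i] = src l[i] by simp [Nat.add_sub_cancel' hij.le, h]] at hloop
  obtain ⟨C, hC, hhead⟩ :=
    exists_isSimpleCycle_head?_eq hloop (List.ne_nil_of_length_pos (by simp; omega))
  refine ⟨C, hC, ?_⟩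
  rw [hhead, List.head?_take, if_neg (by omega), List.head?_drop, List.getElem?_eq_getElem]

theorem IsWalk.idxOf_getElem [DecidableEq E] (hl : IsWalk src tgt u w l) (hi : i < l.length)
    (hcyc : ¬ StartsSimpleCycle src tgt l[i]) : l.idxOf l[i] = i := by
  have hidx : l.idxOf l[i] < l.length := List.idxOf_lt_length_of_mem (List.getElem_mem hi)
  have heq : l[l.idxOf l[i]] = l[i] := List.getElem_idxOf hidx
  rcases lt_trichotomy (l.idxOf l[i]) i with hlt | heq' | hgt
  · exact absurd (heq ▸ hl.startsSimpleCycle_of_getElem_eq hlt hi heq) hcyc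
  · exact heq'
  · exact absurd (hl.startsSimpleCycle_of_getElem_eq hgt hidx heq.symm) hcyc

theorem eq_of_startsSimpleCycle (H : ∀ w, Reaches src tgt v w → ¬ OnTwoCycles src tgt w)
    (hv : Reaches src tgt v (src e)) (hsrc : src e = src e')
    (he : StartsSimpleCycle src tgt e) (he' : StartsSimpleCycle src tgt e') : e = e' := by
  obtain ⟨C, hC, hCe⟩ := he
  obtain ⟨C', hC', hCe'⟩ := he'
  by_contra hne
  refine H _ hv ⟨C, C', hC, hC', fun hrot => hne ?_, ?_, ?_⟩
  · exact hC.head?_eq_of_isRotated hrot hCe hCe' hsrc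
  · exact List.mem_map_of_mem (List.mem_of_mem_head? hCe)
  · exact hsrc ▸ List.mem_map_of_mem (List.mem_of_mem_head? hCe')

open Classical in
/-- The position of `e` in `l`, with the edges that start a simple cycle (the only ones that
can occur more than once) all sent to `l.length`. -/
noncomputable def edgeIndex (src tgt : E → V) (l : List E) (e : E) : ℕ :=
  if StartsSimpleCycle src tgt e then l.length else l.idxOf e

theorem edgeIndex_le_length : edgeIndex src tgt l e ≤ l.length := by
  classical
  unfold edgeIndex
  split_ifs
  exacts [le_rfl, List.idxOf_le_length]

theorem getElem_eq_of_edgeIndex_eq (hi : i < l.length) (h : edgeIndex src tgt l e = i) :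
    l[i] = e := by
  classical
  unfold edgeIndex at h
  split_ifs at h
  · omega
  · subst h
    exact List.getElem_idxOf hi

theorem IsWalk.edgeIndex_getElem (hl : IsWalk src tgt u w l) (hi : i < l.length)
    (hcyc : ¬ StartsSimpleCycle src tgt l[i]) : edgeIndex src tgt l l[i] = i := by
  classical
  rw [edgeIndex, if_neg hcyc]
  exact hl.idxOf_getElem hi hcyc

/-- The next edge is read off its index unless it starts a simple cycle, and then it is the only
such edge leaving its source. -/
theorem eq_of_edgeIndex_eq (H : ∀ w, Reaches src tgt v w → ¬ OnTwoCycles src tgt w)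
    (hl : IsWalk src tgt v w l) (hl' : IsWalk src tgt v w' l') (hlen : l.length = l'.length)
    (h : edgeIndex src tgt l = edgeIndex src tgt l') : l = l' := by
  suffices ∀ i ≤ l.length, l.take i = l'.take i by
    have := this l.length le_rfl
    rwa [List.take_length, hlen, List.take_length] at this
  intro i
  induction i with
  | zero => simp
  | succ i ih =>
    intro hi
    have hi' : i < l'.length := by omega
    have hprefix := ih (by omega)
    have hsrc : src l[i] = src l'[i] :=
      (hl.take (by omega)).target_unique (hprefix ▸ hl'.take hi')
    suffices l[i] = l'[i] by
      simp only [List.take_add_one, hprefix, List.getElem?_eq_getElem (by omega : i < l.length),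
        List.getElem?_eq_getElem hi', this]
    by_cases hcyc : StartsSimpleCycle src tgt l[i]
    · by_cases hcyc' : StartsSimpleCycle src tgt l'[i]
      · exact eq_of_startsSimpleCycle H
          (reaches_iff_exists_isWalk.2 ⟨_, hl.take (by omega)⟩) hsrc hcyc hcyc'
      · have hidx := hl'.edgeIndex_getElem hi' hcyc'
        rw [← h] at hidx
        exact getElem_eq_of_edgeIndex_eq (by omega) hidx
    · have hidx := hl.edgeIndex_getElem (by omega) hcyc
      rw [h] at hidx
      exact (getElem_eq_of_edgeIndex_eq hi' hidx).symm

theorem pathCount_le_pow [Finite E] (H : ∀ w, Reaches src tgt v w → ¬ OnTwoCycles src tgt w)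
    (n : ℕ) : pathCount src tgt v n ≤ (n + 1) ^ Nat.card E := by
  have hcode : ∀ p : {l : List E // l.length = n ∧ IsDiPath src tgt l ∧ StartsAt src l v},
      ∀ e, edgeIndex src tgt p.1 e < n + 1 := fun p _ =>
    Nat.lt_succ_of_le (edgeIndex_le_length.trans_eq p.2.1)
  calc pathCount src tgt v n ≤ Nat.card (E → Fin (n + 1)) := by
        refine Nat.card_le_card_of_injective (fun p e => ⟨_, hcode p e⟩) ?_
        rintro ⟨l, hn, hl, hv⟩ ⟨l', hn', hl', hv'⟩ heq
        obtain ⟨w, hw⟩ := hl.exists_isWalk hv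
        obtain ⟨w', hw'⟩ := hl'.exists_isWalk hv'
        refine Subtype.ext (eq_of_edgeIndex_eq H hw hw' (hn.trans hn'.symm) ?_)
        funext e
        exact congrArg Fin.val (congrFun heq e)
    _ = (n + 1) ^ Nat.card E := by
        rw [Nat.card_fun, Nat.card_fin]

end PolynomialBound

section ExponentialBound

variable {src tgt : E → V} {v w : V}

instance [Finite E] (n : ℕ) :
    Finite {l : List E // l.length = n ∧ IsDiPath src tgt l ∧ StartsAt src l v} :=
  ((List.finite_length_eq E n).subset fun _ hl => hl.1).to_subtype

theorem two_pow_le_pathCount [Finite E] {P B₁ B₂ : List E} (hP : IsWalk src tgt v w P)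
    (hB₁ : IsWalk src tgt w w B₁) (hB₂ : IsWalk src tgt w w B₂) (hlen : B₁.length = B₂.length)
    (hL : 0 < B₁.length) (hne : B₁ ≠ B₂) {n : ℕ} (hn : P.length < n) :
    2 ^ ((n - P.length) / B₁.length) ≤ pathCount src tgt v n := by
  set q := (n - P.length) / B₁.length
  set r := (n - P.length) % B₁.length
  have hr : r < B₁.length := Nat.mod_lt _ hL
  have hqr : q * B₁.length + r = n - P.length := by rw [mul_comm]; exact Nat.div_add_mod _ _
  let path (s : List.Vector Bool q) : List E :=
    P ++ ((s.toList.map (cond · B₁ B₂)).flatten ++ B₁.take r)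
  have hpath : ∀ s, (path s).length = n ∧ IsDiPath src tgt (path s) ∧ StartsAt src (path s) v := by
    intro s
    have hlength : (path s).length = n := by
      simp only [path, List.length_append, List.length_flatten_map_cond hlen, List.length_take,
        List.Vector.toList_length]
      omega
    have hwalk : IsWalk src tgt v (src B₁[r]) (path s) := by
      refine hP.append ((IsWalk.flatten ?_).append (hB₁.take hr))
      simp only [List.mem_map]
      rintro B ⟨(_ | _), -, rfl⟩ <;> assumption
    obtain ⟨hl, hv, -⟩ := (isWalk_iff_isDiPath (List.ne_nil_of_length_pos (by omega))).1 hwalk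
    exact ⟨hlength, hl, hv⟩
  have hinj : Function.Injective fun s => (⟨path s, hpath s⟩ :
      {l : List E // l.length = n ∧ IsDiPath src tgt l ∧ StartsAt src l v}) := by
    intro s t h
    have h' := List.append_cancel_right (List.append_cancel_left (congrArg Subtype.val h))
    exact List.flatten_map_cond_injective hlen hne q h'
  calc 2 ^ q = Nat.card (List.Vector Bool q) := by simp [Nat.card_eq_fintype_card]
    _ ≤ pathCount src tgt v n := Nat.card_le_card_of_injective _ hinj

theorem OnTwoCycles.exists_loops (h : OnTwoCycles src tgt w) :
    ∃ B₁ B₂, IsWalk src tgt w w B₁ ∧ IsWalk src tgt w w B₂ ∧ B₁.length = B₂.length ∧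
      0 < B₁.length ∧ B₁ ≠ B₂ := by
  obtain ⟨C₁, C₂, hC₁, hC₂, hrot, hw₁, hw₂⟩ := h
  obtain ⟨R₁, hR₁, hCR₁, hwalk₁, hne₁⟩ := hC₁.exists_isRotated_isWalk hw₁
  obtain ⟨R₂, hR₂, hCR₂, hwalk₂, hne₂⟩ := hC₂.exists_isRotated_isWalk hw₂
  have hR : R₁ ≠ R₂ := by
    rintro rfl
    exact hrot (hCR₁.trans hCR₂.symm)
  refine ⟨R₁ ++ R₂, R₂ ++ R₁, hwalk₁.append hwalk₂, hwalk₂.append hwalk₁, by simp [add_comm],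
    by simp [List.length_pos_iff.2 hne₁], ?_⟩
  exact List.append_ne_append_comm hR₁.2.of_map hR₂.2.of_map hne₁ hne₂ hR

end ExponentialBound

theorem expPathGrowth_iff_reaches_two_cycles_general [Fintype E]
    (src tgt : E → V) (v : V) :
    (∃ c : ℝ, 1 < c ∧ ∃ N : ℕ, ∀ n ≥ N, c ^ n ≤ (pathCount src tgt v n : ℝ)) ↔
      (∃ w : V, Reaches src tgt v w ∧ OnTwoCycles src tgt w) := by
  constructor
  · intro hgrowth
    by_contra! H
    exact not_exists_one_lt_pow_le_of_le_pow (pathCount_le_pow H) hgrowth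
  · rintro ⟨w, hvw, hw⟩
    obtain ⟨P, hP⟩ := reaches_iff_exists_isWalk.1 hvw
    obtain ⟨B₁, B₂, hB₁, hB₂, hlen, hL, hne⟩ := hw.exists_loops
    exact exists_one_lt_pow_le_of_two_pow_div_le hL
      fun n hn => two_pow_le_pathCount hP hB₁ hB₂ hlen hL hne hn

/-- The number of length-`n` paths starting at `v` grows exponentially
if and only if `v` reaches a vertex `w` lying on two distinct simple cycles. -/
theorem expPathGrowth_iff_reaches_two_cycles [Fintype V] [Fintype E]
    (src tgt : E → V) (v : V) :
    (∃ c : ℝ, 1 < c ∧ ∃ N : ℕ, ∀ n ≥ N, c ^ n ≤ (pathCount src tgt v n : ℝ)) ↔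
      (∃ w : V, Reaches src tgt v w ∧ OnTwoCycles src tgt w) :=
  expPathGrowth_iff_reaches_two_cycles_general src tgt v
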